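/- arXiv:2101.01540 — 2 statements merged into one kernel-verified Lean document; each statement's English description precedes it below -/
import Mathlib

section
/- Let R be a commutative G-graded ring and I, J graded radically principal ideals of R. Then the intersection I ∩ J is a graded radically principal ideal of R. -/
open DirectSum

variable {G A : Type*} [AddGroup G] [DecidableEq G] [CommRing A]

def gradedRadical (𝒜 : G → AddSubgroup A) [GradedRing 𝒜] (I : Ideal A) : Set A :=
  {x | ∀ g : G, ∃ n : ℕ, ((DirectSum.decompose 𝒜 x g : A)) ^ n ∈ I}

def IsGradedRadicallyPrincipal (𝒜 : G → AddSubgroup A) [GradedRing 𝒜] (I : Ideal A) : Prop :=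
  ∃ c : A, SetLike.IsHomogeneousElem 𝒜 c ∧ gradedRadical 𝒜 I = gradedRadical 𝒜 (Ideal.span {c})

def GradedRadicallyPrincipalRing (𝒜 : G → AddSubgroup A) [GradedRing 𝒜] : Prop :=
  ∀ I : Ideal A, I.IsHomogeneous 𝒜 → IsGradedRadicallyPrincipal 𝒜 I

def IsGradedPrime (𝒜 : G → AddSubgroup A) [GradedRing 𝒜] (P : Ideal A) : Prop :=
  P ≠ ⊤ ∧ P.IsHomogeneous 𝒜 ∧
    ∀ ⦃x y : A⦄, SetLike.IsHomogeneousElem 𝒜 x → SetLike.IsHomogeneousElem 𝒜 y → x * y ∈ P →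
      x ∈ P ∨ y ∈ P

theorem mem_gradedRadical_iff (𝒜 : G → AddSubgroup A) [GradedRing 𝒜] (I : Ideal A) (x : A) :
    x ∈ gradedRadical 𝒜 I ↔ ∀ g : G, (decompose 𝒜 x g : A) ∈ I.radical :=
  Iff.rfl

theorem gradedRadical_inf (𝒜 : G → AddSubgroup A) [GradedRing 𝒜] (I J : Ideal A) :
    gradedRadical 𝒜 (I ⊓ J) = gradedRadical 𝒜 I ∩ gradedRadical 𝒜 J := by
  ext x
  simp only [Set.mem_inter_iff, mem_gradedRadical_iff, Ideal.radical_inf, Submodule.mem_inf,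
    forall_and]

theorem gradedRadical_mul (𝒜 : G → AddSubgroup A) [GradedRing 𝒜] (I J : Ideal A) :
    gradedRadical 𝒜 (I * J) = gradedRadical 𝒜 I ∩ gradedRadical 𝒜 J := by
  ext x
  simp only [Set.mem_inter_iff, mem_gradedRadical_iff, Ideal.radical_mul,
    Submodule.mem_inf, forall_and]

theorem IsGradedRadicallyPrincipal.inf {𝒜 : G → AddSubgroup A} [GradedRing 𝒜] {I J : Ideal A}
    (hI : IsGradedRadicallyPrincipal 𝒜 I) (hJ : IsGradedRadicallyPrincipal 𝒜 J) :
    IsGradedRadicallyPrincipal 𝒜 (I ⊓ J) := by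
  obtain ⟨c, hc, hcI⟩ := hI
  obtain ⟨d, hd, hdJ⟩ := hJ
  refine ⟨c * d, hc.mul hd, ?_⟩
  rw [← Ideal.span_singleton_mul_span_singleton, gradedRadical_mul, gradedRadical_inf, hcI, hdJ]

theorem stmt_3 (𝒜 : G → AddSubgroup A) [GradedRing 𝒜] (I J : Ideal A)
    (hI : I.IsHomogeneous 𝒜) (hJ : J.IsHomogeneous 𝒜)
    (hI' : IsGradedRadicallyPrincipal 𝒜 I) (hJ' : IsGradedRadicallyPrincipal 𝒜 J) :
    (I ⊓ J).IsHomogeneous 𝒜 ∧ IsGradedRadicallyPrincipal 𝒜 (I ⊓ J) :=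
  ⟨hI.inf hJ, hI'.inf hJ'⟩
end

section
/- Let R be a commutative G-graded ring that is graded radically principal, and let I_0 ⊆ I_1 ⊆ ... be an increasing chain of graded ideals. If the union I = ⋃_i I_i satisfies Grad(I) = Grad(⟨c⟩) for a homogeneous c, then Grad(I_j) = Grad(⟨c⟩) for some index j. -/
open DirectSum

variable {G A : Type*} [AddGroup G] [DecidableEq G] [CommRing A]

/-!
Since `c` lies in `Grad(⟨c⟩) = Grad(⋃ Iᵢ)` and is homogeneous, some power `cⁿ` lies in the
union, hence in a single `I_j`. A power of `c` in `I_j` already gives `Grad(⟨c⟩) ⊆ Grad(I_j)`,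
and the reverse inclusion is monotonicity of `Grad`.
-/

section GradedRadical

variable (𝒜 : G → AddSubgroup A) [GradedRing 𝒜]

theorem gradedRadical_mono {I J : Ideal A} (hIJ : I ≤ J) :
    gradedRadical 𝒜 I ⊆ gradedRadical 𝒜 J := fun _ hx g =>
  (hx g).imp fun _ hn => hIJ hn

theorem mem_gradedRadical_iff_of_mem {x : A} {i : G} (hx : x ∈ 𝒜 i) (I : Ideal A) :
    x ∈ gradedRadical 𝒜 I ↔ ∃ n : ℕ, x ^ n ∈ I := by
  constructor
  · intro hrad
    simpa only [decompose_of_mem_same 𝒜 hx] using hrad i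
  · rintro ⟨n, hn⟩ g
    by_cases hg : i = g
    · subst hg
      exact ⟨n, by rwa [decompose_of_mem_same 𝒜 hx]⟩
    · exact ⟨1, by simp [decompose_of_mem_ne 𝒜 hx hg]⟩

theorem mem_gradedRadical_span_singleton_self {c : A} {i : G} (hc : c ∈ 𝒜 i) :
    c ∈ gradedRadical 𝒜 (Ideal.span {c}) :=
  (mem_gradedRadical_iff_of_mem 𝒜 hc _).2
    ⟨1, by rw [pow_one]; exact Ideal.mem_span_singleton_self c⟩

theorem gradedRadical_span_singleton_subset_of_pow_mem {c : A} {J : Ideal A} {n : ℕ}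
    (hc : c ^ n ∈ J) : gradedRadical 𝒜 (Ideal.span {c}) ⊆ gradedRadical 𝒜 J := by
  intro x hx g
  obtain ⟨m, hm⟩ := hx g
  obtain ⟨a, ha⟩ := Ideal.mem_span_singleton'.1 hm
  exact ⟨m * n, by rw [pow_mul, ← ha, mul_pow]; exact J.mul_mem_left _ hc⟩

end GradedRadical

theorem stmt_8_general (𝒜 : G → AddSubgroup A) [GradedRing 𝒜] (I : ℕ → Ideal A) (hmono : Monotone I)
    (c : A) (hc : SetLike.IsHomogeneousElem 𝒜 c)
    (h : gradedRadical 𝒜 (⨆ i, I i) = gradedRadical 𝒜 (Ideal.span {c})) :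
    ∃ j, gradedRadical 𝒜 (I j) = gradedRadical 𝒜 (Ideal.span {c}) := by
  obtain ⟨i, hci⟩ := hc
  obtain ⟨n, hn⟩ := (mem_gradedRadical_iff_of_mem 𝒜 hci _).1
    (h ▸ mem_gradedRadical_span_singleton_self 𝒜 hci)
  obtain ⟨j, hj⟩ := (Submodule.mem_iSup_of_directed _ hmono.directed_le).1 hn
  exact ⟨j, (h ▸ gradedRadical_mono 𝒜 (le_iSup I j)).antisymm
    (gradedRadical_span_singleton_subset_of_pow_mem 𝒜 hj)⟩

theorem stmt_8 (𝒜 : G → AddSubgroup A) [GradedRing 𝒜]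
    (hR : GradedRadicallyPrincipalRing 𝒜) (I : ℕ → Ideal A)
    (hmono : Monotone I) (hhom : ∀ i, (I i).IsHomogeneous 𝒜)
    (c : A) (hc : SetLike.IsHomogeneousElem 𝒜 c)
    (h : gradedRadical 𝒜 (⨆ i, I i) = gradedRadical 𝒜 (Ideal.span {c})) :
    ∃ j, gradedRadical 𝒜 (I j) = gradedRadical 𝒜 (Ideal.span {c}) :=
  stmt_8_general 𝒜 I hmono c hc h
end
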